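/- Under Assumption (KŁ with exponent θ ∈ (0,1)): dist(0, −∇_y F(x,y) + N_Y(y)) ≥ μ(max_{y′∈Y} F(x,y′) − F(x,y))^θ for all x ∈ X, y ∈ Y, together with L-weak convexity of F(·,y), L-Lipschitzness of ∇_y F, r > L, and the definitions x_r(y,z) = argmin_{x∈X}{F(x,y)+(r/2)‖x−z‖²}, y₊(z) = proj_Y(y + α∇_y F(x_r(y,z), y)), x_r*(z) = argmin_{x∈X} max_{y∈Y}{F(x,y)+(r/2)‖x−z‖²}: it holds that ‖x_r*(z) − x_r(y₊(z), z)‖ ≤ ω‖y − y₊(z)‖^{1/(2θ)} with ω = (√2/√(r−L))·((1 + αL(1+σ₂))/(αμ))^{1/(2θ)}, σ₂ = 2(r+L)/(r−L). -/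

import Mathlib

/-!
Every inner objective `x ↦ F x y + r/2 ‖x - z‖²` is `(r - L)`-strongly convex, hence so is their
supremum `φ`. Quadratic growth of `φ` at its minimiser `x_r*(z)`, combined with weak duality, bounds
`(r - L)/2 ‖x_r*(z) - x_r(y₊, z)‖²` by the gap `max_y F(x_r(y₊, z), ·) - F(x_r(y₊, z), y₊)`.
The KŁ inequality bounds the `θ`-th power of that gap by the distance from `0` to
`-∇_y F + N_Y(y₊)`; the optimality condition of the projection exhibits a point of this set whose
norm is a multiple of `‖y - y₊‖`, once `‖x_r(y, z) - x_r(y₊, z)‖ ≤ σ₂ ‖y - y₊‖` is known. That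
last estimate comes from adding the strong convexity inequalities of the two prox problems and the
first-order concavity inequalities in `y`.
-/

open scoped RealInnerProductSpace Topology
open Filter Set

section Convexity

variable {E : Type*} [NormedAddCommGroup E] [InnerProductSpace ℝ E] {s : Set E} {m : ℝ}

lemma StrongConvexOn.half_mul_sq_norm_sub_le_of_isMinOn {f : E → ℝ} {x x₀ : E}
    (hf : StrongConvexOn s m f) (hx : x ∈ s) (hx₀ : x₀ ∈ s) (hmin : IsMinOn f s x₀) :
    m / 2 * ‖x - x₀‖ ^ 2 ≤ f x - f x₀ := by
  have hseg : ∀ t ∈ Ioo (0 : ℝ) 1, (1 - t) * (m / 2 * ‖x - x₀‖ ^ 2) ≤ f x - f x₀ := by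
    rintro t ⟨ht0, ht1⟩
    have hcomb := hf.2 hx hx₀ ht0.le (sub_nonneg.2 ht1.le) (add_sub_cancel t 1)
    have hle : f x₀ ≤ f (t • x + (1 - t) • x₀) :=
      hmin (hf.1 hx hx₀ ht0.le (sub_nonneg.2 ht1.le) (add_sub_cancel t 1))
    simp only [smul_eq_mul] at hcomb
    refine le_of_mul_le_mul_left ?_ ht0
    nlinarith
  have hlim : Tendsto (fun t : ℝ => (1 - t) * (m / 2 * ‖x - x₀‖ ^ 2)) (𝓝[>] 0)
      (𝓝 (m / 2 * ‖x - x₀‖ ^ 2)) :=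
    (((continuous_const.sub continuous_id).mul continuous_const).tendsto' 0 _
      (by simp)).mono_left nhdsWithin_le_nhds
  exact le_of_tendsto hlim (by filter_upwards [Ioo_mem_nhdsGT one_pos] using hseg)

lemma ConcaveOn.sub_le_inner_of_hasGradientAt [CompleteSpace E] {f : E → ℝ} {g p q : E}
    (hf : ConcaveOn ℝ s f) (hp : p ∈ s) (hq : q ∈ s) (hg : HasGradientAt f g p) :
    f q - f p ≤ ⟪g, q - p⟫ := by
  have hline : HasDerivAt (f ∘ AffineMap.lineMap (k := ℝ) p q) ⟪g, q - p⟫ 0 := by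
    simpa using hg.hasFDerivAt.comp_hasDerivAt_of_eq (0 : ℝ) AffineMap.hasDerivAt_lineMap
      (AffineMap.lineMap_apply_zero p q).symm
  have := (hf.comp_affineMap (AffineMap.lineMap p q)).slope_le_of_hasDerivAt
    (by simpa using hp) (by simpa using hq) one_pos hline
  simpa [slope_def_field] using this

lemma ConvexOn.strongConvexOn_add_sq_norm_sub {f : E → ℝ} {L : ℝ} (r : ℝ) (z : E)
    (hf : ConvexOn ℝ s fun x => f x + L / 2 * ‖x‖ ^ 2) :
    StrongConvexOn s (r - L) fun x => f x + r / 2 * ‖x - z‖ ^ 2 := by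
  rw [strongConvexOn_iff_convex]
  have hlin := (((-r) • innerₛₗ ℝ z).convexOn hf.1).add_const (r / 2 * ‖z‖ ^ 2)
  refine (hf.add hlin).congr fun x _ => ?_
  simp [norm_sub_sq_real, real_inner_comm]
  ring

lemma strongConvexOn_of_isLUB {ι : Type*} {I : Set ι} {g : ι → E → ℝ} {φ : E → ℝ}
    (hs : Convex ℝ s) (hg : ∀ i ∈ I, StrongConvexOn s m (g i))
    (hφ : ∀ x ∈ s, IsLUB {v | ∃ i ∈ I, v = g i x} (φ x)) : StrongConvexOn s m φ := by
  refine ⟨hs, fun p hp q hq a b ha hb hab => (hφ _ (hs hp hq ha hb hab)).2 ?_⟩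
  rintro _ ⟨i, hi, rfl⟩
  have hgi := (hg i hi).2 hp hq ha hb hab
  simp only [smul_eq_mul] at hgi ⊢
  nlinarith [mul_le_mul_of_nonneg_left ((hφ p hp).1 ⟨i, hi, rfl⟩) ha,
    mul_le_mul_of_nonneg_left ((hφ q hq).1 ⟨i, hi, rfl⟩) hb]

end Convexity

lemma sqrt_sq_add_sq_le_add {a b : ℝ} (ha : 0 ≤ a) (hb : 0 ≤ b) : √(a ^ 2 + b ^ 2) ≤ a + b :=
  (Real.sqrt_le_left (add_nonneg ha hb)).2 (by nlinarith)

lemma eq_zero_of_le_neg_mul_sqrt {L c a b : ℝ} (hL : L < 0) (hc : 0 ≤ c)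
    (h : c ≤ L * √(a ^ 2 + b ^ 2)) : a = 0 ∧ b = 0 := by
  have hsqrt : √(a ^ 2 + b ^ 2) = 0 :=
    le_antisymm (by nlinarith [Real.sqrt_nonneg (a ^ 2 + b ^ 2)]) (Real.sqrt_nonneg _)
  rw [Real.sqrt_eq_zero (by positivity)] at hsqrt
  constructor <;> nlinarith [sq_nonneg a, sq_nonneg b]

lemma le_mul_of_sub_mul_sq_le {L r a b : ℝ} (hL : 0 ≤ L) (hr : L < r) (ha : 0 ≤ a) (hb : 0 ≤ b)
    (h : (r - L) * a ^ 2 ≤ L * (a + b) * b) : a ≤ 2 * (r + L) / (r - L) * b := by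
  rw [div_mul_eq_mul_div, le_div_iff₀ (sub_pos.2 hr)]
  rcases le_total a b with hab | hba
  · nlinarith
  by_contra! hlt
  have ha' : 0 < a := by nlinarith
  nlinarith [mul_lt_mul_of_pos_left hlt ha', mul_le_mul_of_nonneg_left hba (mul_nonneg hL hb),
    mul_nonneg (mul_nonneg ha hb) (hL.trans hr.le)]

lemma le_mul_rpow_of_half_mul_sq_le {m θ B D N e : ℝ} (hm : 0 < m) (hθ : 0 < θ) (hB : 0 ≤ B)
    (hD : 0 ≤ D) (hN : m / 2 * N ^ 2 ≤ e) (he : e ^ θ ≤ B * D) :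
    N ≤ √2 / √m * B ^ (1 / (2 * θ)) * D ^ (1 / (2 * θ)) := by
  have he0 : 0 ≤ e := le_trans (by positivity) hN
  have he' : e ≤ (B * D) ^ θ⁻¹ := (Real.le_rpow_inv_iff_of_pos he0 (by positivity) hθ).2 he
  have hN2 : N ^ 2 ≤ 2 / m * (B * D) ^ θ⁻¹ := by
    rw [div_mul_eq_mul_div, le_div_iff₀ hm]
    nlinarith
  calc N ≤ √(2 / m * (B * D) ^ θ⁻¹) := Real.le_sqrt_of_sq_le hN2
    _ = √2 / √m * B ^ (1 / (2 * θ)) * D ^ (1 / (2 * θ)) := by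
      rw [Real.sqrt_mul (by positivity), Real.sqrt_div' _ hm.le, Real.sqrt_eq_rpow ((B * D) ^ θ⁻¹),
        ← Real.rpow_mul (by positivity), Real.mul_rpow hB hD, mul_assoc]
      congr 3 <;> ring

section Prox

variable {E H : Type*} [NormedAddCommGroup E] [InnerProductSpace ℝ E]
  [NormedAddCommGroup H] [InnerProductSpace ℝ H]

lemma half_mul_sq_norm_sub_le_duality_gap {ι : Type*} {X : Set E} {Y : Set ι}
    {F : E → ι → ℝ} {φ : E → ℝ} {m r M : ℝ} {z x₀ x₁ : E} {y₁ : ι}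
    (hφsc : StrongConvexOn X m φ)
    (hφ : ∀ x ∈ X, IsLUB {s | ∃ y ∈ Y, s = F x y + r / 2 * ‖x - z‖ ^ 2} (φ x))
    (hx₀ : x₀ ∈ X) (hφmin : IsMinOn φ X x₀)
    (hx₁ : x₁ ∈ X) (hy₁ : y₁ ∈ Y) (hmin₁ : IsMinOn (fun x => F x y₁ + r / 2 * ‖x - z‖ ^ 2) X x₁)
    (hM : ∀ y ∈ Y, F x₁ y ≤ M) :
    m / 2 * ‖x₀ - x₁‖ ^ 2 ≤ M - F x₁ y₁ := by
  have hgrowth := hφsc.half_mul_sq_norm_sub_le_of_isMinOn hx₁ hx₀ hφmin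
  have hφx₁ : φ x₁ ≤ M + r / 2 * ‖x₁ - z‖ ^ 2 :=
    (hφ x₁ hx₁).2 (by rintro _ ⟨y, hy, rfl⟩; linarith [hM y hy])
  have hφx₀ : F x₁ y₁ + r / 2 * ‖x₁ - z‖ ^ 2 ≤ φ x₀ :=
    (hmin₁ hx₀).trans ((hφ x₀ hx₀).1 ⟨y₁, hy₁, rfl⟩)
  rw [norm_sub_rev]
  linarith

variable [CompleteSpace H] {X : Set E} {Y : Set H} {F : E → H → ℝ} {G : E → H → H}
  {L r : ℝ} {z x₁ x₂ : E} {y₁ y₂ : H}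

lemma mul_sq_norm_sub_le_inner_of_isMinOn {m : ℝ}
    (hsc : ∀ y ∈ Y, StrongConvexOn X m fun x => F x y + r / 2 * ‖x - z‖ ^ 2)
    (hconc : ∀ x ∈ X, ConcaveOn ℝ Y (F x)) (hgrad : ∀ x y, HasGradientAt (F x) (G x y) y)
    (hx₁ : x₁ ∈ X) (hy₁ : y₁ ∈ Y) (hmin₁ : IsMinOn (fun x => F x y₁ + r / 2 * ‖x - z‖ ^ 2) X x₁)
    (hx₂ : x₂ ∈ X) (hy₂ : y₂ ∈ Y) (hmin₂ : IsMinOn (fun x => F x y₂ + r / 2 * ‖x - z‖ ^ 2) X x₂) :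
    m * ‖x₁ - x₂‖ ^ 2 ≤ ⟪G x₂ y₂ - G x₁ y₁, y₁ - y₂⟫ := by
  have h₁ := (hsc y₁ hy₁).half_mul_sq_norm_sub_le_of_isMinOn hx₂ hx₁ hmin₁
  have h₂ := (hsc y₂ hy₂).half_mul_sq_norm_sub_le_of_isMinOn hx₁ hx₂ hmin₂
  have c₁ := (hconc x₂ hx₂).sub_le_inner_of_hasGradientAt hy₂ hy₁ (hgrad x₂ y₂)
  have c₂ := (hconc x₁ hx₁).sub_le_inner_of_hasGradientAt hy₁ hy₂ (hgrad x₁ y₁)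
  rw [norm_sub_rev] at h₁
  rw [← neg_sub y₁ y₂, inner_neg_right] at c₂
  rw [inner_sub_left]
  linarith

lemma norm_sub_le_mul_norm_sub_of_isMinOn (hL : 0 ≤ L) (hr : L < r)
    (hsc : ∀ y ∈ Y, StrongConvexOn X (r - L) fun x => F x y + r / 2 * ‖x - z‖ ^ 2)
    (hconc : ∀ x ∈ X, ConcaveOn ℝ Y (F x)) (hgrad : ∀ x y, HasGradientAt (F x) (G x y) y)
    (hlip : ‖G x₁ y₁ - G x₂ y₂‖ ≤ L * √(‖x₁ - x₂‖ ^ 2 + ‖y₁ - y₂‖ ^ 2))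
    (hx₁ : x₁ ∈ X) (hy₁ : y₁ ∈ Y) (hmin₁ : IsMinOn (fun x => F x y₁ + r / 2 * ‖x - z‖ ^ 2) X x₁)
    (hx₂ : x₂ ∈ X) (hy₂ : y₂ ∈ Y) (hmin₂ : IsMinOn (fun x => F x y₂ + r / 2 * ‖x - z‖ ^ 2) X x₂) :
    ‖x₁ - x₂‖ ≤ 2 * (r + L) / (r - L) * ‖y₁ - y₂‖ := by
  refine le_mul_of_sub_mul_sq_le hL hr (norm_nonneg _) (norm_nonneg _) ?_
  calc (r - L) * ‖x₁ - x₂‖ ^ 2 ≤ ⟪G x₂ y₂ - G x₁ y₁, y₁ - y₂⟫ :=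
        mul_sq_norm_sub_le_inner_of_isMinOn hsc hconc hgrad hx₁ hy₁ hmin₁ hx₂ hy₂ hmin₂
    _ ≤ ‖G x₁ y₁ - G x₂ y₂‖ * ‖y₁ - y₂‖ := norm_sub_rev (G x₁ y₁) _ ▸ real_inner_le_norm _ _
    _ ≤ L * (‖x₁ - x₂‖ + ‖y₁ - y₂‖) * ‖y₁ - y₂‖ := by
      gcongr
      exact hlip.trans (mul_le_mul_of_nonneg_left
        (sqrt_sq_add_sq_le_add (norm_nonneg _) (norm_nonneg _)) hL)

end Prox

section KL

variable {E H : Type*} [NormedAddCommGroup E] [NormedAddCommGroup H] [InnerProductSpace ℝ H]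

lemma infDist_zero_neg_add_normalCone_le {Y : Set H} {y p g g' : H} {α : ℝ} (hα : 0 < α)
    (hproj : ∀ w ∈ Y, ⟪y + α • g - p, w - p⟫ ≤ 0) :
    Metric.infDist 0 {u | ∃ v, (∀ w ∈ Y, ⟪v, w - p⟫ ≤ 0) ∧ u = -g' + v} ≤
      ‖g - g'‖ + α⁻¹ * ‖y - p‖ := by
  have hmem : (g - g') + α⁻¹ • (y - p) ∈
      {u | ∃ v, (∀ w ∈ Y, ⟪v, w - p⟫ ≤ 0) ∧ u = -g' + v} := by
    refine ⟨α⁻¹ • (y + α • g - p), fun w hw => ?_, ?_⟩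
    · rw [real_inner_smul_left]
      exact mul_nonpos_of_nonneg_of_nonpos (inv_nonneg.2 hα.le) (hproj w hw)
    · rw [smul_sub α⁻¹ (y + α • g), smul_add, smul_smul, inv_mul_cancel₀ hα.ne', one_smul,
        smul_sub]
      abel
  calc Metric.infDist (0 : H) _ ≤ ‖(g - g') + α⁻¹ • (y - p)‖ := by
        simpa using Metric.infDist_le_dist_of_mem (x := 0) hmem
    _ ≤ ‖g - g'‖ + α⁻¹ * ‖y - p‖ := by
      grw [norm_add_le, norm_smul, Real.norm_of_nonneg (inv_nonneg.2 hα.le)]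

lemma rpow_le_mul_norm_sub_of_kl {Y : Set H} {G : E → H → H} {x x' : E} {y p : H}
    {L α μ θ σ e : ℝ} (hL : 0 ≤ L) (hα : 0 < α) (hμ : 0 < μ)
    (hKL : μ * e ^ θ ≤ Metric.infDist 0 {u | ∃ v, (∀ w ∈ Y, ⟪v, w - p⟫ ≤ 0) ∧ u = -G x' p + v})
    (hproj : ∀ w ∈ Y, ⟪y + α • G x y - p, w - p⟫ ≤ 0)
    (hlip : ‖G x y - G x' p‖ ≤ L * √(‖x - x'‖ ^ 2 + ‖y - p‖ ^ 2))
    (hσ : ‖x - x'‖ ≤ σ * ‖y - p‖) :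
    e ^ θ ≤ (1 + α * L * (1 + σ)) / (α * μ) * ‖y - p‖ := by
  have hμe : μ * e ^ θ ≤ (L * (1 + σ) + α⁻¹) * ‖y - p‖ :=
    calc μ * e ^ θ ≤ ‖G x y - G x' p‖ + α⁻¹ * ‖y - p‖ :=
          hKL.trans (infDist_zero_neg_add_normalCone_le hα hproj)
      _ ≤ L * (‖x - x'‖ + ‖y - p‖) + α⁻¹ * ‖y - p‖ := by
          grw [hlip, sqrt_sq_add_sq_le_add (norm_nonneg _) (norm_nonneg _)]
      _ ≤ (L * (1 + σ) + α⁻¹) * ‖y - p‖ := by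
          grw [hσ]
          linarith
  rw [div_mul_eq_mul_div, le_div_iff₀ (by positivity)]
  calc e ^ θ * (α * μ) = α * (μ * e ^ θ) := by ring
    _ ≤ α * ((L * (1 + σ) + α⁻¹) * ‖y - p‖) := by gcongr
    _ = (1 + α * L * (1 + σ)) * ‖y - p‖ := by field_simp; ring

end KL

theorem dual_error_bound_KL_general (n d : ℕ)
    (X : Set (EuclideanSpace ℝ (Fin n))) (Y : Set (EuclideanSpace ℝ (Fin d)))
    (F : EuclideanSpace ℝ (Fin n) → EuclideanSpace ℝ (Fin d) → ℝ)
    (Gy : EuclideanSpace ℝ (Fin n) → EuclideanSpace ℝ (Fin d) → EuclideanSpace ℝ (Fin d))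
    (L r α μ θ : ℝ) (z : EuclideanSpace ℝ (Fin n)) (y : EuclideanSpace ℝ (Fin d))
    (xr : EuclideanSpace ℝ (Fin d) → EuclideanSpace ℝ (Fin n))
    (yplus : EuclideanSpace ℝ (Fin d))
    (xstar : EuclideanSpace ℝ (Fin n))
    (φ Fmax : EuclideanSpace ℝ (Fin n) → ℝ)
    (hXc : Convex ℝ X)
    (hr : L < r) (hα : 0 < α) (hμ : 0 < μ) (hθ : θ ∈ Set.Ioo (0 : ℝ) 1)
    (hwc : ∀ y' ∈ Y, ConvexOn ℝ X (fun x => F x y' + L / 2 * ‖x‖ ^ 2))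
    (hconc : ∀ x ∈ X, ConcaveOn ℝ Y (fun y' => F x y'))
    (hgrad : ∀ x y', HasGradientAt (F x) (Gy x y') y')
    (hlip : ∀ x x' y' y'', ‖Gy x y' - Gy x' y''‖ ≤
      L * Real.sqrt (‖x - x'‖ ^ 2 + ‖y' - y''‖ ^ 2))
    -- max_{y' ∈ Y} F(x, y') = Fmax x
    (hFmax : ∀ x ∈ X, IsLUB {s | ∃ y' ∈ Y, s = F x y'} (Fmax x))
    -- one-sided Kurdyka–Łojasiewicz condition with exponent θ
    (hKL : ∀ x ∈ X, ∀ y' ∈ Y,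
      μ * (Fmax x - F x y') ^ θ ≤
        Metric.infDist 0
          {u : EuclideanSpace ℝ (Fin d) |
            ∃ v, (∀ w ∈ Y, ⟪v, w - y'⟫ ≤ 0) ∧ u = -Gy x y' + v})
    (hxr : ∀ y' ∈ Y, xr y' ∈ X ∧
      IsMinOn (fun x => F x y' + r / 2 * ‖x - z‖ ^ 2) X (xr y'))
    (hy : y ∈ Y)
    (hyplus : yplus ∈ Y ∧ ∀ w ∈ Y, ⟪y + α • Gy (xr y) y - yplus, w - yplus⟫ ≤ 0)
    (hφ : ∀ x ∈ X, IsLUB {s | ∃ y' ∈ Y, s = F x y' + r / 2 * ‖x - z‖ ^ 2} (φ x))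
    (hxstar : xstar ∈ X ∧ IsMinOn φ X xstar) :
    ‖xstar - xr yplus‖ ≤
      (Real.sqrt 2 / Real.sqrt (r - L)) *
        ((1 + α * L * (1 + 2 * (r + L) / (r - L))) / (α * μ)) ^ (1 / (2 * θ)) *
        ‖y - yplus‖ ^ (1 / (2 * θ)) := by
  obtain ⟨hθ, -⟩ := hθ
  obtain ⟨hyplusY, hproj⟩ := hyplus
  rcases lt_or_ge L 0 with hL | hL
  · -- a negative Lipschitz constant forces both spaces to be trivial
    obtain ⟨hx, -⟩ := eq_zero_of_le_neg_mul_sqrt hL (norm_nonneg _) (hlip xstar (xr yplus) y y)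
    obtain ⟨-, hy⟩ := eq_zero_of_le_neg_mul_sqrt hL (norm_nonneg _) (hlip xstar xstar y yplus)
    rw [hx, hy, Real.zero_rpow (by positivity), mul_zero]
  obtain ⟨hx₁, hmin₁⟩ := hxr y hy
  obtain ⟨hx₂, hmin₂⟩ := hxr yplus hyplusY
  have hsc y' (hy' : y' ∈ Y) := (hwc y' hy').strongConvexOn_add_sq_norm_sub r z
  have hgap := half_mul_sq_norm_sub_le_duality_gap (strongConvexOn_of_isLUB hXc hsc hφ) hφ
    hxstar.1 hxstar.2 hx₂ hyplusY hmin₂ fun y' hy' => (hFmax _ hx₂).1 ⟨y', hy', rfl⟩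
  have hσ := norm_sub_le_mul_norm_sub_of_isMinOn hL hr hsc hconc hgrad (hlip _ _ _ _)
    hx₁ hy hmin₁ hx₂ hyplusY hmin₂
  have hθgap := rpow_le_mul_norm_sub_of_kl hL hα hμ (hKL _ hx₂ _ hyplusY) hproj (hlip _ _ _ _) hσ
  have hσ0 : 0 ≤ 2 * (r + L) / (r - L) := div_nonneg (by linarith) (by linarith)
  exact le_mul_rpow_of_half_mul_sq_le (sub_pos.2 hr) hθ (by positivity) (norm_nonneg _) hgap hθgap

/-- Dual error bound with KŁ exponent `θ ∈ (0,1)`: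
`‖x_r*(z) - x_r(y₊(z), z)‖ ≤ ω ‖y - y₊(z)‖^{1/(2θ)}` with
`ω = (√2/√(r-L))·((1 + αL(1+σ₂))/(αμ))^{1/(2θ)}`, `σ₂ = 2(r+L)/(r-L)`. -/
theorem dual_error_bound_KL (n d : ℕ)
    (X : Set (EuclideanSpace ℝ (Fin n))) (Y : Set (EuclideanSpace ℝ (Fin d)))
    (F : EuclideanSpace ℝ (Fin n) → EuclideanSpace ℝ (Fin d) → ℝ)
    (Gy : EuclideanSpace ℝ (Fin n) → EuclideanSpace ℝ (Fin d) → EuclideanSpace ℝ (Fin d))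
    (L r α μ θ : ℝ) (z : EuclideanSpace ℝ (Fin n)) (y : EuclideanSpace ℝ (Fin d))
    (xr : EuclideanSpace ℝ (Fin d) → EuclideanSpace ℝ (Fin n))
    (yplus : EuclideanSpace ℝ (Fin d))
    (xstar : EuclideanSpace ℝ (Fin n))
    (φ Fmax : EuclideanSpace ℝ (Fin n) → ℝ)
    (hX : IsClosed X) (hXc : Convex ℝ X)
    (hYcomp : IsCompact Y) (hYc : Convex ℝ Y)
    (hr : L < r) (hα : 0 < α) (hμ : 0 < μ) (hθ : θ ∈ Set.Ioo (0 : ℝ) 1)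
    (hwc : ∀ y' ∈ Y, ConvexOn ℝ X (fun x => F x y' + L / 2 * ‖x‖ ^ 2))
    (hconc : ∀ x ∈ X, ConcaveOn ℝ Y (fun y' => F x y'))
    (hgrad : ∀ x y', HasGradientAt (F x) (Gy x y') y')
    (hlip : ∀ x x' y' y'', ‖Gy x y' - Gy x' y''‖ ≤
      L * Real.sqrt (‖x - x'‖ ^ 2 + ‖y' - y''‖ ^ 2))
    -- max_{y' ∈ Y} F(x, y') = Fmax x
    (hFmax : ∀ x ∈ X, IsLUB {s | ∃ y' ∈ Y, s = F x y'} (Fmax x))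
    -- one-sided Kurdyka–Łojasiewicz condition with exponent θ
    (hKL : ∀ x ∈ X, ∀ y' ∈ Y,
      μ * (Fmax x - F x y') ^ θ ≤
        Metric.infDist 0
          {u : EuclideanSpace ℝ (Fin d) |
            ∃ v, (∀ w ∈ Y, ⟪v, w - y'⟫ ≤ 0) ∧ u = -Gy x y' + v})
    (hxr : ∀ y' ∈ Y, xr y' ∈ X ∧
      IsMinOn (fun x => F x y' + r / 2 * ‖x - z‖ ^ 2) X (xr y'))
    (hy : y ∈ Y)
    (hyplus : yplus ∈ Y ∧ ∀ w ∈ Y, ⟪y + α • Gy (xr y) y - yplus, w - yplus⟫ ≤ 0)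
    (hφ : ∀ x ∈ X, IsLUB {s | ∃ y' ∈ Y, s = F x y' + r / 2 * ‖x - z‖ ^ 2} (φ x))
    (hxstar : xstar ∈ X ∧ IsMinOn φ X xstar) :
    ‖xstar - xr yplus‖ ≤
      (Real.sqrt 2 / Real.sqrt (r - L)) *
        ((1 + α * L * (1 + 2 * (r + L) / (r - L))) / (α * μ)) ^ (1 / (2 * θ)) *
        ‖y - yplus‖ ^ (1 / (2 * θ)) :=
  dual_error_bound_KL_general n d X Y F Gy L r α μ θ z y xr yplus xstar φ Fmax hXc hr hα hμ hθ hwc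
    hconc hgrad hlip hFmax hKL hxr hy hyplus hφ hxstar
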